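/- Let N ≥ 1 and τ > 0. Let R : ℝ → (N×N real matrices) be continuous with R(t)_{mn} ≥ 0 for all m ≠ n and all t ∈ [0,τ]; let p^eq : ℝ → ℝ^N be continuous with p^eq(t)_n > 0 and detailed balance R(t)_{nm}·p^eq(t)_m = R(t)_{mn}·p^eq(t)_n for all n, m, t ∈ [0,τ]; let p : ℝ → ℝ^N be differentiable on [0,τ] with p(t)_n > 0; and let v : ℝ → ℝ^N be continuous and satisfy p'(t) = K_{p(t)} v(t) for all t ∈ [0,τ], where (K_{p(t)} u)_n := Σ_{m≠n} R(t)_{nm} · p^eq(t)_m · Φ(p(t)_n/p^eq(t)_n, p(t)_m/p^eq(t)_m) · (u_n − u_m). Then ( Σ_n |p(τ)_n − p(0)_n| )² ≤ 2 · ( ∫₀^τ Σ_{n≠m} R(t)_{mn} · p(t)_n dt ) · ( ∫₀^τ ⟨v(t), K_{p(t)} v(t)⟩ dt ). -/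

import Mathlib

/-- The logarithmic mean of two positive real numbers. -/
noncomputable def logMean (x y : ℝ) : ℝ :=
  if x = y then x else (x - y) / (Real.log x - Real.log y)

/-- The Onsager-type matrix `K_p` acting on a vector `v`:
`(K_p v)_n = Σ_{m≠n} R_{nm} p^eq_m Φ(p_n/p^eq_n, p_m/p^eq_m) (v_n − v_m)`. -/
noncomputable def Kop {N : ℕ} (R : Matrix (Fin N) (Fin N) ℝ) (peq p v : Fin N → ℝ) :
    Fin N → ℝ :=
  fun n => ∑ m ∈ Finset.univ.filter (· ≠ n),
    R n m * peq m * logMean (p n / peq n) (p m / peq m) * (v n - v m)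

/-!
Write `K_p v` as `Σ_{m ≠ n} w_{nm} (v_n - v_m)` with conductances
`w_{nm} = R_{nm} p^eq_m Φ(p_n/p^eq_n, p_m/p^eq_m)`, which detailed balance makes symmetric.
Then `⟨v, K_p v⟩ = ½ Σ w_{nm} (v_n - v_m)²`, and `Φ ≤ (x + y)/2` bounds `Σ w_{nm}` by the
dynamical activity. Edgewise AM-GM gives `‖ṗ‖₁ ≤ (c/2)·activity + c⁻¹·⟨v, K_p v⟩` for every
`c > 0`; integrating over `[0, τ]` and optimising in `c` yields the bound.
-/

open Finset Real Set MeasureTheory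

theorem two_mul_sub_div_add_le_log_div {x y : ℝ} (hy : 0 < y) (hyx : y ≤ x) :
    2 * (x - y) / (x + y) ≤ log (x / y) := by
  have ha : 0 ≤ x / y - 1 := by rwa [sub_nonneg, one_le_div hy]
  -- the first term of the series of `log (x / y)` in odd powers of `(x - y) / (x + y)`
  have h0 := le_hasSum (hasSum_log_one_add ha) 0 fun j _ => by positivity
  rw [add_sub_cancel] at h0
  refine le_trans (le_of_eq ?_) h0
  rw [div_sub_one hy.ne', div_add' _ _ _ hy.ne', div_div_div_cancel_right₀ hy.ne']
  ring

theorem logMean_comm (x y : ℝ) : logMean x y = logMean y x := by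
  unfold logMean
  rcases eq_or_ne x y with rfl | h
  · rfl
  · rw [if_neg h, if_neg h.symm, ← neg_div_neg_eq, neg_sub, neg_sub]

theorem logMean_pos {x y : ℝ} (hx : 0 < x) (hy : 0 < y) : 0 < logMean x y := by
  unfold logMean
  split_ifs with h
  · exact hx
  rcases lt_or_gt_of_ne h with hlt | hlt
  · exact div_pos_of_neg_of_neg (sub_neg.2 hlt) (sub_neg.2 (log_lt_log hx hlt))
  · exact div_pos (sub_pos.2 hlt) (sub_pos.2 (log_lt_log hy hlt))

theorem logMean_le_add_div_two {x y : ℝ} (hx : 0 < x) (hy : 0 < y) :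
    logMean x y ≤ (x + y) / 2 := by
  wlog hyx : y < x generalizing x y
  · rcases (not_lt.1 hyx).lt_or_eq with hxy | rfl
    · rw [logMean_comm, add_comm]
      exact this hy hx hxy
    · simp [logMean]
  have hlog : 0 < log x - log y := sub_pos.2 (log_lt_log hy hyx)
  have key := two_mul_sub_div_add_le_log_div hy hyx.le
  rw [log_div hx.ne' hy.ne', div_le_iff₀ (by positivity)] at key
  rw [logMean, if_neg hyx.ne', div_le_iff₀ hlog]
  linarith

section OffDiagonal

variable {ι : Type*} [Fintype ι] [DecidableEq ι]

theorem sum_filter_ne_comm {M : Type*} [AddCommMonoid M] (f : ι → ι → M) :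
    ∑ n, ∑ m ∈ univ.filter (· ≠ n), f n m = ∑ n, ∑ m ∈ univ.filter (· ≠ n), f m n := by
  simp only [sum_filter]
  rw [sum_comm]
  simp only [ne_comm]

theorem sum_filter_ne_mul_sub_sq {w : ι → ι → ℝ} (hw : ∀ n m, w n m = w m n) (v : ι → ℝ) :
    ∑ n, ∑ m ∈ univ.filter (· ≠ n), w n m * (v n - v m) ^ 2 =
      2 * ∑ n, v n * ∑ m ∈ univ.filter (· ≠ n), w n m * (v n - v m) := by
  have hswap : ∑ n, ∑ m ∈ univ.filter (· ≠ n), w n m * (v m * (v m - v n)) =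
      ∑ n, ∑ m ∈ univ.filter (· ≠ n), w n m * (v n * (v n - v m)) := by
    rw [sum_filter_ne_comm]
    simp only [hw]
  calc ∑ n, ∑ m ∈ univ.filter (· ≠ n), w n m * (v n - v m) ^ 2
      = ∑ n, ∑ m ∈ univ.filter (· ≠ n),
          (w n m * (v n * (v n - v m)) + w n m * (v m * (v m - v n))) := by
        congr! 2 with n - m; ring
    _ = 2 * ∑ n, ∑ m ∈ univ.filter (· ≠ n), w n m * (v n * (v n - v m)) := by
        simp only [sum_add_distrib, hswap]
        ring
    _ = 2 * ∑ n, v n * ∑ m ∈ univ.filter (· ≠ n), w n m * (v n - v m) := by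
        simp only [mul_sum]
        congr! 3 with n - m; ring

theorem sum_filter_ne_mul_sub_nonneg {w : ι → ι → ℝ} (hw : ∀ n m, w n m = w m n)
    (hw₀ : ∀ n m, m ≠ n → 0 ≤ w n m) (v : ι → ℝ) :
    0 ≤ ∑ n, v n * ∑ m ∈ univ.filter (· ≠ n), w n m * (v n - v m) := by
  have h := sum_filter_ne_mul_sub_sq hw v
  have : 0 ≤ ∑ n, ∑ m ∈ univ.filter (· ≠ n), w n m * (v n - v m) ^ 2 :=
    sum_nonneg fun n _ => sum_nonneg fun m hm =>
      mul_nonneg (hw₀ n m (mem_filter.1 hm).2) (sq_nonneg _)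
  linarith

theorem sum_abs_sum_filter_ne_mul_sub_le {w : ι → ι → ℝ} (hw : ∀ n m, w n m = w m n)
    (hw₀ : ∀ n m, m ≠ n → 0 ≤ w n m) (v : ι → ℝ) {c : ℝ} (hc : 0 < c) :
    ∑ n, |∑ m ∈ univ.filter (· ≠ n), w n m * (v n - v m)| ≤
      c / 2 * ∑ n, ∑ m ∈ univ.filter (· ≠ n), w n m +
        c⁻¹ * ∑ n, v n * ∑ m ∈ univ.filter (· ≠ n), w n m * (v n - v m) := by
  have amgm : ∀ n m, m ≠ n → w n m * |v n - v m| ≤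
      c / 2 * w n m + (2 * c)⁻¹ * (w n m * (v n - v m) ^ 2) := by
    intro n m hmn
    have h := mul_nonneg (hw₀ n m hmn) (sq_nonneg (c - |v n - v m|))
    rw [← sq_abs (v n - v m)]
    field_simp
    nlinarith
  calc ∑ n, |∑ m ∈ univ.filter (· ≠ n), w n m * (v n - v m)|
      ≤ ∑ n, ∑ m ∈ univ.filter (· ≠ n), w n m * |v n - v m| := by
        refine sum_le_sum fun n _ => (abs_sum_le_sum_abs _ _).trans_eq (sum_congr rfl fun m hm => ?_)
        rw [abs_mul, abs_of_nonneg (hw₀ n m (mem_filter.1 hm).2)]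
    _ ≤ ∑ n, ∑ m ∈ univ.filter (· ≠ n),
          (c / 2 * w n m + (2 * c)⁻¹ * (w n m * (v n - v m) ^ 2)) :=
        sum_le_sum fun n _ => sum_le_sum fun m hm => amgm n m (mem_filter.1 hm).2
    _ = _ := by
        simp only [sum_add_distrib, ← mul_sum, sum_filter_ne_mul_sub_sq hw v]
        field_simp

end OffDiagonal

section Kop

variable {N : ℕ} {R : Matrix (Fin N) (Fin N) ℝ} {peq p : Fin N → ℝ}

noncomputable def kopWeight (R : Matrix (Fin N) (Fin N) ℝ) (peq p : Fin N → ℝ) (n m : Fin N) :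
    ℝ :=
  R n m * peq m * logMean (p n / peq n) (p m / peq m)

theorem Kop_eq_sum_kopWeight (v : Fin N → ℝ) (n : Fin N) :
    Kop R peq p v n = ∑ m ∈ univ.filter (· ≠ n), kopWeight R peq p n m * (v n - v m) :=
  rfl

theorem kopWeight_comm (hdb : ∀ n m, R n m * peq m = R m n * peq n) (n m : Fin N) :
    kopWeight R peq p n m = kopWeight R peq p m n := by
  rw [kopWeight, kopWeight, hdb, logMean_comm]

theorem kopWeight_nonneg (hpeq : ∀ n, 0 < peq n) (hp : ∀ n, 0 < p n) {n m : Fin N}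
    (hR : 0 ≤ R n m) : 0 ≤ kopWeight R peq p n m :=
  mul_nonneg (mul_nonneg hR (hpeq m).le)
    (logMean_pos (div_pos (hp n) (hpeq n)) (div_pos (hp m) (hpeq m))).le

theorem kopWeight_le (hpeq : ∀ n, 0 < peq n) (hp : ∀ n, 0 < p n)
    (hdb : ∀ n m, R n m * peq m = R m n * peq n) {n m : Fin N} (hR : 0 ≤ R n m) :
    kopWeight R peq p n m ≤ (R m n * p n + R n m * p m) / 2 :=
  calc kopWeight R peq p n m
      ≤ R n m * peq m * ((p n / peq n + p m / peq m) / 2) :=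
        mul_le_mul_of_nonneg_left
          (logMean_le_add_div_two (div_pos (hp n) (hpeq n)) (div_pos (hp m) (hpeq m)))
          (mul_nonneg hR (hpeq m).le)
    _ = (R m n * peq n * (p n / peq n) + R n m * (peq m * (p m / peq m))) / 2 := by
        rw [← hdb n m]; ring
    _ = (R m n * p n + R n m * p m) / 2 := by
        rw [mul_assoc, mul_div_cancel₀ _ (hpeq n).ne', mul_div_cancel₀ _ (hpeq m).ne']

variable (hR : ∀ m n, m ≠ n → 0 ≤ R m n) (hpeq : ∀ n, 0 < peq n) (hp : ∀ n, 0 < p n)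
  (hdb : ∀ n m, R n m * peq m = R m n * peq n)
include hR hpeq hp hdb

theorem sum_kopWeight_le :
    ∑ n, ∑ m ∈ univ.filter (· ≠ n), kopWeight R peq p n m ≤
      ∑ n, ∑ m ∈ univ.filter (· ≠ n), R m n * p n :=
  calc ∑ n, ∑ m ∈ univ.filter (· ≠ n), kopWeight R peq p n m
      ≤ ∑ n, ∑ m ∈ univ.filter (· ≠ n), (R m n * p n + R n m * p m) / 2 :=
        sum_le_sum fun n _ => sum_le_sum fun m hm =>
          kopWeight_le hpeq hp hdb (hR n m (mem_filter.1 hm).2.symm)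
    _ = ∑ n, ∑ m ∈ univ.filter (· ≠ n), R m n * p n := by
        simp only [add_div, sum_add_distrib]
        rw [sum_filter_ne_comm fun n m => R n m * p m / 2]
        simp only [← sum_div]
        ring

theorem abs_Kop_le (v : Fin N → ℝ) (n : Fin N) :
    |Kop R peq p v n| ≤
      ∑ m ∈ univ.filter (· ≠ n), (R m n * p n + R n m * p m) / 2 * |v n - v m| := by
  rw [Kop_eq_sum_kopWeight]
  refine (abs_sum_le_sum_abs _ _).trans (sum_le_sum fun m hm => ?_)
  have hRnm := hR n m (mem_filter.1 hm).2.symm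
  rw [abs_mul, abs_of_nonneg (kopWeight_nonneg hpeq hp hRnm)]
  exact mul_le_mul_of_nonneg_right (kopWeight_le hpeq hp hdb hRnm) (abs_nonneg _)

theorem inner_Kop_nonneg (v : Fin N → ℝ) : 0 ≤ ∑ n, v n * Kop R peq p v n :=
  sum_filter_ne_mul_sub_nonneg (kopWeight_comm hdb)
    (fun n m hmn => kopWeight_nonneg hpeq hp (hR n m hmn.symm)) v

theorem sum_abs_Kop_le (v : Fin N → ℝ) {c : ℝ} (hc : 0 < c) :
    ∑ n, |Kop R peq p v n| ≤
      c / 2 * ∑ n, ∑ m ∈ univ.filter (· ≠ n), R m n * p n +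
        c⁻¹ * ∑ n, v n * Kop R peq p v n :=
  (sum_abs_sum_filter_ne_mul_sub_le (kopWeight_comm hdb)
    (fun n m hmn => kopWeight_nonneg hpeq hp (hR n m hmn.symm)) v hc).trans
    (by gcongr c / 2 * ?_ + _; exact sum_kopWeight_le hR hpeq hp hdb)

end Kop

theorem sq_le_two_mul_mul_of_forall_le {L a b : ℝ} (hL : 0 ≤ L) (ha : 0 ≤ a) (hb : 0 ≤ b)
    (h : ∀ c > 0, L ≤ c / 2 * a + c⁻¹ * b) : L ^ 2 ≤ 2 * a * b := by
  rcases hL.eq_or_lt with rfl | hL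
  · nlinarith [mul_nonneg ha hb]
  rcases ha.eq_or_lt with rfl | ha
  · -- `c = (b + 1) / L` gives `L ≤ L * b / (b + 1) < L`
    have hc := h ((b + 1) / L) (by positivity)
    have hlt : L / (b + 1) * b < L := by
      rw [div_mul_eq_mul_div, div_lt_iff₀ (by positivity)]
      linarith
    simp only [mul_zero, zero_add, inv_div] at hc
    linarith
  · -- the optimal choice `c = L / a`
    have hc := h (L / a) (by positivity)
    have e : L / a / 2 * a + (L / a)⁻¹ * b = L / 2 + a * b / L := by field_simp
    rw [e, ← sub_le_iff_le_add', le_div_iff₀ hL] at hc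
    nlinarith

theorem intervalIntegrable_of_hasDerivAt_of_norm_le {F : Type*} [NormedAddCommGroup F]
    [NormedSpace ℝ F] [CompleteSpace F] {f f' : ℝ → F} {g : ℝ → ℝ} {a b : ℝ} (hab : a ≤ b)
    (hf : ∀ t ∈ Icc a b, HasDerivAt f (f' t) t) (hg : IntervalIntegrable g volume a b)
    (hbound : ∀ t ∈ Icc a b, ‖f' t‖ ≤ g t) : IntervalIntegrable f' volume a b := by
  rw [intervalIntegrable_iff_integrableOn_Icc_of_le hab] at hg ⊢
  -- `f'` agrees on `[a, b]` with `deriv f`, which is always measurable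
  refine hg.mono' ((aestronglyMeasurable_deriv f _).congr ?_)
    (ae_restrict_of_forall_mem measurableSet_Icc hbound)
  exact ae_restrict_of_forall_mem measurableSet_Icc fun t ht => (hf t ht).deriv

theorem sum_abs_integral_le {ι : Type*} (s : Finset ι) {f : ι → ℝ → ℝ} {g : ℝ → ℝ} {a b : ℝ}
    (hab : a ≤ b) (hf : ∀ i ∈ s, IntervalIntegrable (f i) volume a b)
    (hg : IntervalIntegrable g volume a b) (hfg : ∀ t ∈ Icc a b, ∑ i ∈ s, |f i t| ≤ g t) :
    ∑ i ∈ s, |∫ t in a..b, f i t| ≤ ∫ t in a..b, g t :=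
  calc ∑ i ∈ s, |∫ t in a..b, f i t|
      ≤ ∑ i ∈ s, ∫ t in a..b, |f i t| :=
        sum_le_sum fun i _ => intervalIntegral.abs_integral_le_integral_abs hab
    _ = ∫ t in a..b, ∑ i ∈ s, |f i t| :=
        (intervalIntegral.integral_finsetSum fun i hi => (hf i hi).abs).symm
    _ ≤ ∫ t in a..b, g t := by
        refine intervalIntegral.integral_mono_on hab ?_ hg hfg
        simpa only [Finset.sum_fn] using IntervalIntegrable.sum s fun i hi => (hf i hi).abs

theorem total_variation_sq_le_two_mul_activity_mul_entropy_general (N : ℕ)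
    (τ : ℝ) (hτ : 0 < τ)
    (R : ℝ → Matrix (Fin N) (Fin N) ℝ) (hRcont : ∀ m n : Fin N, Continuous fun t => R t m n)
    (hR : ∀ t ∈ Set.Icc (0:ℝ) τ, ∀ m n : Fin N, m ≠ n → 0 ≤ R t m n)
    (peq : ℝ → Fin N → ℝ)
    (hpeq : ∀ t ∈ Set.Icc (0:ℝ) τ, ∀ n, 0 < peq t n)
    (hdb : ∀ t ∈ Set.Icc (0:ℝ) τ, ∀ n m : Fin N, R t n m * peq t m = R t m n * peq t n)
    (p : ℝ → Fin N → ℝ) (hp : ∀ t ∈ Set.Icc (0:ℝ) τ, ∀ n, 0 < p t n)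
    (v : ℝ → Fin N → ℝ) (hvcont : ∀ n : Fin N, Continuous fun t => v t n)
    (hderiv : ∀ t ∈ Set.Icc (0:ℝ) τ, ∀ n : Fin N,
      HasDerivAt (fun s => p s n) (Kop (R t) (peq t) (p t) (v t) n) t) :
    (∑ n, |p τ n - p 0 n|)^2
      ≤ 2 * (∫ t in (0:ℝ)..τ, ∑ n, ∑ m ∈ Finset.univ.filter (· ≠ n), R t m n * p t n)
          * (∫ t in (0:ℝ)..τ, ∑ n, v t n * Kop (R t) (peq t) (p t) (v t) n) := by
  have hpcont (n : Fin N) : ContinuousOn (fun t => p t n) (Icc 0 τ) :=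
    fun t ht => (hderiv t ht n).continuousAt.continuousWithinAt
  have hK (n : Fin N) : IntervalIntegrable (fun t => Kop (R t) (peq t) (p t) (v t) n) volume 0 τ :=
    intervalIntegrable_of_hasDerivAt_of_norm_le hτ.le (fun t ht => hderiv t ht n)
      (ContinuousOn.intervalIntegrable_of_Icc hτ.le (by fun_prop))
      fun t ht => abs_Kop_le (hR t ht) (hpeq t ht) (hp t ht) (hdb t ht) (v t) n
  have hactivity : IntervalIntegrable
      (fun t => ∑ n, ∑ m ∈ univ.filter (· ≠ n), R t m n * p t n) volume 0 τ :=
    ContinuousOn.intervalIntegrable_of_Icc hτ.le (by fun_prop)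
  have hentropy : IntervalIntegrable
      (fun t => ∑ n, v t n * Kop (R t) (peq t) (p t) (v t) n) volume 0 τ := by
    simpa only [Finset.sum_fn] using IntervalIntegrable.sum univ fun n _ =>
      (hK n).continuousOn_mul (hvcont n).continuousOn
  refine sq_le_two_mul_mul_of_forall_le (sum_nonneg fun n _ => abs_nonneg _)
    (intervalIntegral.integral_nonneg hτ.le fun t ht => sum_nonneg fun n _ =>
      sum_nonneg fun m hm => mul_nonneg (hR t ht m n (mem_filter.1 hm).2) (hp t ht n).le)
    (intervalIntegral.integral_nonneg hτ.le fun t ht =>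
      inner_Kop_nonneg (hR t ht) (hpeq t ht) (hp t ht) (hdb t ht) (v t))
    fun c hc => ?_
  have hftc (n : Fin N) : ∫ t in (0:ℝ)..τ, Kop (R t) (peq t) (p t) (v t) n = p τ n - p 0 n :=
    intervalIntegral.integral_eq_sub_of_hasDerivAt
      (fun t ht => hderiv t (uIcc_of_le hτ.le ▸ ht) n) (hK n)
  simp only [← hftc]
  rw [← intervalIntegral.integral_const_mul, ← intervalIntegral.integral_const_mul,
    ← intervalIntegral.integral_add (hactivity.const_mul _) (hentropy.const_mul _)]
  exact sum_abs_integral_le univ hτ.le (fun n _ => hK n)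
    ((hactivity.const_mul _).add (hentropy.const_mul _))
    fun t ht => sum_abs_Kop_le (hR t ht) (hpeq t ht) (hp t ht) (hdb t ht) (v t) hc

/-- Classical speed limit: the squared total variation distance between the initial and final
distributions is bounded by twice the time-integrated dynamical activity times the total
entropy production `∫₀^τ ⟨v, K_p v⟩ dt`. -/
theorem total_variation_sq_le_two_mul_activity_mul_entropy (N : ℕ) (hN : 1 ≤ N)
    (τ : ℝ) (hτ : 0 < τ)
    (R : ℝ → Matrix (Fin N) (Fin N) ℝ) (hRcont : ∀ m n : Fin N, Continuous fun t => R t m n)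
    (hR : ∀ t ∈ Set.Icc (0:ℝ) τ, ∀ m n : Fin N, m ≠ n → 0 ≤ R t m n)
    (peq : ℝ → Fin N → ℝ) (hpeqcont : ∀ n : Fin N, Continuous fun t => peq t n)
    (hpeq : ∀ t ∈ Set.Icc (0:ℝ) τ, ∀ n, 0 < peq t n)
    (hdb : ∀ t ∈ Set.Icc (0:ℝ) τ, ∀ n m : Fin N, R t n m * peq t m = R t m n * peq t n)
    (p : ℝ → Fin N → ℝ) (hp : ∀ t ∈ Set.Icc (0:ℝ) τ, ∀ n, 0 < p t n)
    (v : ℝ → Fin N → ℝ) (hvcont : ∀ n : Fin N, Continuous fun t => v t n)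
    (hderiv : ∀ t ∈ Set.Icc (0:ℝ) τ, ∀ n : Fin N,
      HasDerivAt (fun s => p s n) (Kop (R t) (peq t) (p t) (v t) n) t) :
    (∑ n, |p τ n - p 0 n|)^2
      ≤ 2 * (∫ t in (0:ℝ)..τ, ∑ n, ∑ m ∈ Finset.univ.filter (· ≠ n), R t m n * p t n)
          * (∫ t in (0:ℝ)..τ, ∑ n, v t n * Kop (R t) (peq t) (p t) (v t) n) :=
  total_variation_sq_le_two_mul_activity_mul_entropy_general N τ hτ R hRcont hR peq hpeq hdb p hp v
    hvcont hderiv
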